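/- Let A be an m × n real matrix with full column rank, with rows a₁, …, a_m all nonzero, and let x, y ∈ ℝⁿ. Choose index i with probability ‖a_i‖²/‖A‖_F². If x_new is the orthogonal projection of y onto the hyperplane {z : ⟨a_i, z⟩ = ⟨a_i, x⟩}, then 𝔼‖x_new - x‖² ≤ (1 - 1/R) ‖y - x‖², where R = ‖A⁻¹‖² ‖A‖_F² with ‖A⁻¹‖ = inf{M : M‖Az‖ ≥ ‖z‖ for all z}. -/

import Mathlib

open Finset

/-- Euclidean norm on `Fin k → ℝ`. -/
noncomputable def enorm {k : ℕ} (v : Fin k → ℝ) : ℝ := Real.sqrt (∑ j, v j ^ 2)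

/-- Standard inner product on `Fin k → ℝ`. -/
noncomputable def ip {k : ℕ} (v w : Fin k → ℝ) : ℝ := ∑ j, v j * w j

/-- Frobenius norm of a matrix. -/
noncomputable def frob {m n : ℕ} (A : Matrix (Fin m) (Fin n) ℝ) : ℝ :=
  Real.sqrt (∑ i, ∑ j, A i j ^ 2)

/-- `‖A⁻¹‖ = inf {M : M‖Az‖ ≥ ‖z‖ for all z}`. -/
noncomputable def invNorm {m n : ℕ} (A : Matrix (Fin m) (Fin n) ℝ) : ℝ :=
  sInf {M : ℝ | ∀ z : Fin n → ℝ, _root_.enorm z ≤ M * _root_.enorm (A.mulVec z)}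

/-!
The step replaces the error `e = y - x` by `e + c • aᵢ` with `c = -⟨aᵢ, e⟩ / ‖aᵢ‖²`, which removes
exactly the component of `e` along `aᵢ`, so `‖aᵢ‖² ‖x_new - x‖² = ‖aᵢ‖² ‖e‖² - ⟨aᵢ, e⟩²`.
Averaging with weights `‖aᵢ‖² / ‖A‖_F²` gives `‖e‖² - ‖Ae‖² / ‖A‖_F²`, and `‖e‖ ≤ ‖A⁻¹‖ ‖Ae‖`.
-/

open Matrix

theorem ip_eq_dotProduct {k : ℕ} (v w : Fin k → ℝ) : ip v w = v ⬝ᵥ w := rfl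

theorem enorm_sq_eq_dotProduct {k : ℕ} (v : Fin k → ℝ) : _root_.enorm v ^ 2 = v ⬝ᵥ v := by
  rw [_root_.enorm, Real.sq_sqrt (by positivity)]
  simp only [dotProduct, sq]

theorem frob_sq_eq_sum_enorm_sq {m n : ℕ} (A : Matrix (Fin m) (Fin n) ℝ) :
    frob A ^ 2 = ∑ i, _root_.enorm (A i) ^ 2 := by
  rw [frob, Real.sq_sqrt (by positivity)]
  refine sum_congr rfl fun i _ => ?_
  rw [_root_.enorm, Real.sq_sqrt (by positivity)]

theorem enorm_mulVec_sq {m n : ℕ} (A : Matrix (Fin m) (Fin n) ℝ) (v : Fin n → ℝ) :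
    _root_.enorm (A *ᵥ v) ^ 2 = ∑ i, (A i ⬝ᵥ v) ^ 2 := by
  rw [_root_.enorm, Real.sq_sqrt (by positivity)]
  rfl

/-- The orthogonal projection of `y` onto the hyperplane `{z | ⟨a, z⟩ = b}` (for `a ≠ 0`). -/
noncomputable def hyperplaneProj {k : ℕ} (a : Fin k → ℝ) (b : ℝ) (y : Fin k → ℝ) : Fin k → ℝ :=
  y + ((b - ip a y) / _root_.enorm a ^ 2) • a

theorem enorm_sq_mul_enorm_hyperplaneProj_sub_sq {k : ℕ} (a x y : Fin k → ℝ) :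
    _root_.enorm a ^ 2 * _root_.enorm (hyperplaneProj a (ip a x) y - x) ^ 2 =
      _root_.enorm a ^ 2 * _root_.enorm (y - x) ^ 2 - (a ⬝ᵥ (y - x)) ^ 2 := by
  rcases eq_or_ne a 0 with rfl | ha
  · simp [_root_.enorm]
  have ha2 : a ⬝ᵥ a ≠ 0 := mt dotProduct_self_eq_zero.1 ha
  have hstep : hyperplaneProj a (ip a x) y - x =
      (y - x) + (-(a ⬝ᵥ (y - x)) / _root_.enorm a ^ 2) • a := by
    rw [hyperplaneProj, ip_eq_dotProduct, ip_eq_dotProduct, dotProduct_sub]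
    abel_nf
  rw [hstep]
  simp only [enorm_sq_eq_dotProduct]
  simp only [dotProduct_add, add_dotProduct, dotProduct_smul, smul_dotProduct, smul_eq_mul,
    dotProduct_comm (y - x) a]
  field_simp
  ring

theorem enorm_le_invNorm_mul {m n : ℕ} (A : Matrix (Fin m) (Fin n) ℝ)
    (hA : {M : ℝ | ∀ z : Fin n → ℝ, _root_.enorm z ≤ M * _root_.enorm (A *ᵥ z)}.Nonempty)
    (z : Fin n → ℝ) : _root_.enorm z ≤ invNorm A * _root_.enorm (A *ᵥ z) := by
  obtain ⟨M, hM⟩ := hA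
  have hAz0 : 0 ≤ _root_.enorm (A *ᵥ z) := Real.sqrt_nonneg _
  rcases hAz0.eq_or_lt with hAz | hAz
  · simpa only [← hAz, mul_zero] using hM z
  · rw [← div_le_iff₀ hAz]
    exact le_csInf ⟨M, hM⟩ fun M' hM' => (div_le_iff₀ hAz).2 (hM' z)

theorem enorm_sq_div_invNorm_sq_le {m n : ℕ} (A : Matrix (Fin m) (Fin n) ℝ) (z : Fin n → ℝ) :
    _root_.enorm z ^ 2 / invNorm A ^ 2 ≤ _root_.enorm (A *ᵥ z) ^ 2 := by
  by_cases hA : {M : ℝ | ∀ z : Fin n → ℝ, _root_.enorm z ≤ M * _root_.enorm (A *ᵥ z)}.Nonempty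
  · refine div_le_of_le_mul₀ (sq_nonneg _) (sq_nonneg _) ?_
    rw [← mul_pow, mul_comm]
    exact pow_le_pow_left₀ (Real.sqrt_nonneg _) (enorm_le_invNorm_mul A hA z) 2
  · -- with no admissible `M` (`A` not injective), `invNorm A = sInf ∅ = 0`
    rw [invNorm, Set.not_nonempty_iff_eq_empty.1 hA, Real.sInf_empty]
    rw [zero_pow two_ne_zero, div_zero]
    positivity

theorem sum_weighted_enorm_hyperplaneProj_sub_sq {m n : ℕ} (A : Matrix (Fin m) (Fin n) ℝ)
    (x y : Fin n → ℝ) :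
    ∑ i, (_root_.enorm (A i) ^ 2 / frob A ^ 2) *
        _root_.enorm (hyperplaneProj (A i) (ip (A i) x) y - x) ^ 2 =
      (frob A ^ 2 * _root_.enorm (y - x) ^ 2 - _root_.enorm (A *ᵥ (y - x)) ^ 2) / frob A ^ 2 := by
  simp only [div_mul_eq_mul_div, ← sum_div, enorm_sq_mul_enorm_hyperplaneProj_sub_sq,
    sum_sub_distrib, ← sum_mul, frob_sq_eq_sum_enorm_sq, enorm_mulVec_sq]

theorem stmt_4_general (m n : ℕ) (A : Matrix (Fin m) (Fin n) ℝ)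
    (x y : Fin n → ℝ) :
    ∑ i, (_root_.enorm (A i) ^ 2 / frob A ^ 2) *
        _root_.enorm ((y + ((ip (A i) x - ip (A i) y) / _root_.enorm (A i) ^ 2) • A i) - x) ^ 2 ≤
      (1 - 1 / (invNorm A ^ 2 * frob A ^ 2)) * _root_.enorm (y - x) ^ 2 := by
  change ∑ i, _ * _root_.enorm (hyperplaneProj (A i) (ip (A i) x) y - x) ^ 2 ≤ _
  rw [sum_weighted_enorm_hyperplaneProj_sub_sq]
  rcases (sq_nonneg (frob A)).eq_or_lt with hF | hF
  · simp only [← hF, div_zero, mul_zero, sub_zero, one_mul]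
    positivity
  · rw [sub_div, mul_div_cancel_left₀ _ hF.ne', sub_mul, one_mul, one_div_mul_eq_div, ← div_div]
    gcongr
    exact enorm_sq_div_invNorm_sq_le A (y - x)

/-- One-step expected contraction of randomized Kaczmarz (noiseless). -/
theorem stmt_4 (m n : ℕ) (A : Matrix (Fin m) (Fin n) ℝ) (hrank : A.rank = n)
    (hrows : ∀ i, A i ≠ 0) (x y : Fin n → ℝ) :
    ∑ i, (_root_.enorm (A i) ^ 2 / frob A ^ 2) *
        _root_.enorm ((y + ((ip (A i) x - ip (A i) y) / _root_.enorm (A i) ^ 2) • A i) - x) ^ 2 ≤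
      (1 - 1 / (invNorm A ^ 2 * frob A ^ 2)) * _root_.enorm (y - x) ^ 2 :=
  stmt_4_general m n A x y
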